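/- For Δ > 0 and σ > 0, as ε → ∞, Φ(Δ/(2σ) − εσ/Δ) − e^ε·Φ(−Δ/(2σ) − εσ/Δ) tends to 0. -/

import Mathlib

/-!
Both terms tend to `0` separately. The first is `Φ` at an argument tending to `-∞`. For the
second, the Gaussian tail bound `Φ(-x) ≤ exp (-x ^ 2 / 2)` (`x ≥ 0`) gives
`exp ε * Φ(-a - ε b) ≤ exp (ε - (a + ε b) ^ 2 / 2)`, and the exponent is a quadratic in `ε` with
negative leading coefficient.
-/

open MeasureTheory Real Set Filter

/-- The standard normal CDF. -/
noncomputable def stdΦ (x : ℝ) : ℝ :=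
  (Real.sqrt (2 * Real.pi))⁻¹ * ∫ t in Set.Iic x, Real.exp (-t ^ 2 / 2)

lemma exp_neg_sq_div_two_eq (t : ℝ) : exp (-t ^ 2 / 2) = exp (-(1 / 2) * t ^ 2) := by
  ring_nf

lemma integrable_exp_neg_sq_div_two : Integrable fun t : ℝ => exp (-t ^ 2 / 2) := by
  simpa only [exp_neg_sq_div_two_eq] using integrable_exp_neg_mul_sq (by norm_num : (0 : ℝ) < 1 / 2)

lemma integral_exp_neg_sq_div_two : ∫ t : ℝ, exp (-t ^ 2 / 2) = √(2 * π) := by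
  simp only [exp_neg_sq_div_two_eq, integral_gaussian]
  congr 1
  ring

lemma stdΦ_nonneg (x : ℝ) : 0 ≤ stdΦ x :=
  mul_nonneg (by positivity) (setIntegral_nonneg measurableSet_Iic fun t _ => (exp_pos _).le)

lemma stdΦ_neg_le_exp {x : ℝ} (hx : 0 ≤ x) : stdΦ (-x) ≤ exp (-x ^ 2 / 2) := by
  set g := fun t : ℝ => exp (-x ^ 2 / 2) * exp (-(t + x) ^ 2 / 2)
  have hg : Integrable g := (integrable_exp_neg_sq_div_two.comp_add_right x).const_mul _
  -- For `t ≤ -x ≤ 0`: `t ^ 2 - x ^ 2 - (t + x) ^ 2 = -2 x (t + x) ≥ 0`.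
  have hpointwise : ∀ t ∈ Iic (-x), exp (-t ^ 2 / 2) ≤ g t := by
    intro t ht
    simp only [g, ← exp_add, exp_le_exp]
    nlinarith [mem_Iic.mp ht]
  have hg_integral : ∫ t, g t = exp (-x ^ 2 / 2) * √(2 * π) := by
    rw [integral_const_mul, integral_add_right_eq_self (fun t => exp (-t ^ 2 / 2)) x,
      integral_exp_neg_sq_div_two]
  have hbound : ∫ t in Iic (-x), exp (-t ^ 2 / 2) ≤ exp (-x ^ 2 / 2) * √(2 * π) :=
    calc ∫ t in Iic (-x), exp (-t ^ 2 / 2)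
        ≤ ∫ t in Iic (-x), g t :=
          setIntegral_mono_on integrable_exp_neg_sq_div_two.integrableOn hg.integrableOn
            measurableSet_Iic hpointwise
      _ ≤ ∫ t, g t := setIntegral_le_integral hg (Eventually.of_forall fun t => by positivity)
      _ = exp (-x ^ 2 / 2) * √(2 * π) := hg_integral
  have hsqrt : 0 < √(2 * π) := by positivity
  calc stdΦ (-x) ≤ (√(2 * π))⁻¹ * (exp (-x ^ 2 / 2) * √(2 * π)) :=
        mul_le_mul_of_nonneg_left hbound (by positivity)
    _ = exp (-x ^ 2 / 2) := by field_simp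

lemma tendsto_stdΦ_atBot : Tendsto stdΦ atBot (nhds 0) := by
  have hexp : Tendsto (fun x : ℝ => exp (-(-x) ^ 2 / 2)) atBot (nhds 0) := by
    refine tendsto_exp_atBot.comp (Tendsto.atBot_div_const two_pos ?_)
    exact tendsto_neg_atTop_atBot.comp
      ((tendsto_pow_atTop two_ne_zero).comp tendsto_neg_atBot_atTop)
  have hle : ∀ᶠ x : ℝ in atBot, stdΦ x ≤ exp (-(-x) ^ 2 / 2) := by
    filter_upwards [eventually_le_atBot 0] with x hx
    simpa only [neg_neg] using stdΦ_neg_le_exp (x := -x) (by linarith)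
  exact tendsto_of_tendsto_of_tendsto_of_le_of_le' tendsto_const_nhds hexp
    (Eventually.of_forall stdΦ_nonneg) hle

lemma tendsto_const_sub_mul_atBot (a : ℝ) {b : ℝ} (hb : 0 < b) :
    Tendsto (fun ε : ℝ => a - ε * b) atTop atBot := by
  simpa only [sub_eq_add_neg, Function.comp_def, id] using
    tendsto_atBot_add_const_left atTop a
      (tendsto_neg_atTop_atBot.comp (tendsto_id.atTop_mul_const hb))

lemma tendsto_stdΦ_const_sub_mul (a : ℝ) {b : ℝ} (hb : 0 < b) :
    Tendsto (fun ε : ℝ => stdΦ (a - ε * b)) atTop (nhds 0) :=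
  tendsto_stdΦ_atBot.comp (tendsto_const_sub_mul_atBot a hb)

lemma tendsto_exp_mul_stdΦ_neg_sub_mul (a : ℝ) {b : ℝ} (hb : 0 < b) :
    Tendsto (fun ε : ℝ => exp ε * stdΦ (-a - ε * b)) atTop (nhds 0) := by
  have hquadratic : Tendsto (fun ε : ℝ => ε + -(a + ε * b) ^ 2 / 2) atTop atBot := by
    have hrw : ∀ ε : ℝ, ε + -(a + ε * b) ^ 2 / 2
        = ε * ((1 - a * b) - ε * (b ^ 2 / 2)) + -(a ^ 2 / 2) := fun ε => by ring
    simp only [hrw]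
    exact tendsto_atBot_add_const_right _ _
      (tendsto_id.atTop_mul_atBot₀ (tendsto_const_sub_mul_atBot _ (by positivity)))
  have hle : ∀ᶠ ε : ℝ in atTop, exp ε * stdΦ (-a - ε * b) ≤ exp (ε + -(a + ε * b) ^ 2 / 2) := by
    filter_upwards [(tendsto_id.atTop_mul_const hb).eventually_ge_atTop (-a)] with ε hε
    rw [exp_add, show -a - ε * b = -(a + ε * b) by ring]
    exact mul_le_mul_of_nonneg_left (stdΦ_neg_le_exp (by simp only [id] at hε; linarith))
      (exp_pos ε).le
  exact tendsto_of_tendsto_of_tendsto_of_le_of_le' tendsto_const_nhds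
    (tendsto_exp_atBot.comp hquadratic)
    (Eventually.of_forall fun ε => mul_nonneg (exp_pos ε).le (stdΦ_nonneg _)) hle

theorem stmt4 (Δ σ : ℝ) (hΔ : 0 < Δ) (hσ : 0 < σ) :
    Filter.Tendsto (fun ε : ℝ =>
      stdΦ (Δ / (2 * σ) - ε * σ / Δ) - Real.exp ε * stdΦ (-(Δ / (2 * σ)) - ε * σ / Δ))
      Filter.atTop (nhds 0) := by
  have hb : 0 < σ / Δ := div_pos hσ hΔ
  simpa only [mul_div_assoc, sub_zero] using
    (tendsto_stdΦ_const_sub_mul (Δ / (2 * σ)) hb).sub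
      (tendsto_exp_mul_stdΦ_neg_sub_mul (Δ / (2 * σ)) hb)
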